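/- arXiv:2207.13538 — 6 statements merged into one kernel-verified Lean document; each statement's English description precedes it below -/
import Mathlib

section
/- Let ζ be a complex number and let t₁ ≤ t₂ ≤ ... ≤ t_k and t'₁ ≤ t'₂ ≤ ... ≤ t'_k be 2k real numbers in [0,1). Then the determinant of the k×k matrix with (i,j) entry ζ^{1{t'_j < t_i}} equals (1-ζ)^{k-1} if t₁ ≤ t'₁ < t₂ ≤ t'₂ < ... < t_k ≤ t'_k, equals (-1)^{k-1} ζ (1-ζ)^{k-1} if t'₁ < t₁ ≤ t'₂ < t₂ ≤ ... ≤ t'_k < t_k, and equals 0 otherwise. -/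
/-!
Because `t` is monotone, `t i ≤ t' j` holds exactly when `i < c j`, where `c j` counts the
`t`'s that are `≤ t' j`. So the `j`-th column is `(1, …, 1, ζ, …, ζ)` with `c j` ones, and `c` is
a monotone map `Fin k → {0, …, k}`. If `c` is not injective two columns coincide. Otherwise `c`
misses exactly one value `s`. The two interlacing patterns are `s = 0` and `s = k`, whose
determinants follow by induction after subtracting the second row from the first; for `0 < s < k`
both the all-`ζ` and the all-`1` column occur, and they are proportional.
-/

open Finset

namespace Matrix

variable {R : Type*} [CommRing R]

theorem det_succ_of_row_zero_eq_single {n : ℕ} (A : Matrix (Fin (n + 1)) (Fin (n + 1)) R)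
    {j : Fin (n + 1)} {a : R} (h : A 0 = Pi.single j a) :
    A.det = (-1) ^ (j : ℕ) * a * (A.submatrix Fin.succ j.succAbove).det := by
  rw [det_succ_row_zero, Fintype.sum_eq_single j fun l hl => by simp [h, hl]]
  simp [h]

theorem det_succ_succ_of_row_zero_sub_row_one_eq_single {n : ℕ}
    (A : Matrix (Fin (n + 2)) (Fin (n + 2)) R) {j : Fin (n + 2)} {a : R}
    (h : A 0 - A 1 = Pi.single j a) :
    A.det = (-1) ^ (j : ℕ) * a * (A.submatrix Fin.succ j.succAbove).det := by
  rw [← det_updateRow_add_smul_self A zero_ne_one (-1),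
    det_succ_of_row_zero_eq_single _ (by simpa [sub_eq_add_neg] using h)]
  congr 2

end Matrix

def stepMatrix {R : Type*} [One R] {k : ℕ} (ζ : R) (c : Fin k → ℕ) :
    Matrix (Fin k) (Fin k) R :=
  Matrix.of fun i j => if (i : ℕ) < c j then 1 else ζ

section stepMatrix

variable {R : Type*} [CommRing R] (ζ : R)

theorem det_stepMatrix_val_add_one (n : ℕ) :
    (stepMatrix ζ fun j : Fin (n + 1) => (j : ℕ) + 1).det = (1 - ζ) ^ n := by
  induction n with
  | zero => simp [stepMatrix]
  | succ n ih =>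
    have hrow : stepMatrix ζ (fun j : Fin (n + 2) => (j : ℕ) + 1) 0 -
        stepMatrix ζ (fun j : Fin (n + 2) => (j : ℕ) + 1) 1 = Pi.single 0 (1 - ζ) := by
      funext j
      rcases j with ⟨_ | _ | j, hj⟩ <;>
        simp only [stepMatrix, Matrix.of_apply, Pi.sub_apply, Pi.single_apply, Fin.ext_iff,
          Fin.val_zero, Fin.val_one] <;>
        norm_num
    rw [Matrix.det_succ_succ_of_row_zero_sub_row_one_eq_single _ hrow, pow_succ', ← ih]
    simp [stepMatrix, Matrix.submatrix]

theorem det_stepMatrix_val (n : ℕ) :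
    (stepMatrix ζ fun j : Fin (n + 1) => (j : ℕ)).det = (-1) ^ n * ζ * (1 - ζ) ^ n := by
  induction n with
  | zero => simp [stepMatrix]
  | succ n ih =>
    have hrow : stepMatrix ζ (fun j : Fin (n + 2) => (j : ℕ)) 0 -
        stepMatrix ζ (fun j : Fin (n + 2) => (j : ℕ)) 1 = Pi.single 1 (1 - ζ) := by
      funext j
      rcases j with ⟨_ | _ | j, hj⟩ <;>
        simp only [stepMatrix, Matrix.of_apply, Pi.sub_apply, Pi.single_apply, Fin.ext_iff,
          Fin.val_zero, Fin.val_one] <;>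
        norm_num
    have hminor : (stepMatrix ζ fun j : Fin (n + 2) => (j : ℕ)).submatrix Fin.succ
        (Fin.succAbove 1) = stepMatrix ζ fun j : Fin (n + 1) => (j : ℕ) := by
      ext i j
      cases j using Fin.cases <;> simp [stepMatrix]
    rw [Matrix.det_succ_succ_of_row_zero_sub_row_one_eq_single _ hrow, hminor, ih]
    simp only [Fin.val_one, pow_succ]
    ring

theorem det_stepMatrix_eq_zero_of_not_injective {k : ℕ} {c : Fin k → ℕ}
    (hc : ¬ Function.Injective c) : (stepMatrix ζ c).det = 0 := by
  obtain ⟨a, b, hab, hne⟩ := Function.not_injective_iff.mp hc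
  exact Matrix.det_zero_of_column_eq hne fun i => by simp [stepMatrix, hab]

theorem det_stepMatrix_eq_zero_of_eq_zero_of_le {k : ℕ} {c : Fin k → ℕ} {a b : Fin k}
    (ha : c a = 0) (hb : k ≤ c b) : (stepMatrix ζ c).det = 0 := by
  have hab : a ≠ b := fun h => by have := b.isLt; rw [h] at ha; omega
  -- column `a` is `ζ` times column `b`
  rw [← Matrix.det_updateCol_add_smul_self _ hab (-ζ)]
  refine Matrix.det_eq_zero_of_column_eq_zero a fun i => ?_
  have hi : (i : ℕ) < c b := i.isLt.trans_le hb
  simp [stepMatrix, ha, hi]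

end stepMatrix

theorem StrictMono.fin_trichotomy {n : ℕ} {c : Fin (n + 1) → ℕ} (hc : StrictMono c)
    (hle : c (Fin.last n) ≤ n + 1) :
    (∀ j, c j = j) ∨ (∀ j, c j = j + 1) ∨ (c 0 = 0 ∧ c (Fin.last n) = n + 1) := by
  let p : LTSeries ℕ := .mk n c hc
  have from_zero (j : Fin (n + 1)) : c 0 + j ≤ c j :=
    p.apply_add_index_le_apply_add_index_nat 0 j (Fin.zero_le j)
  have to_last (j : Fin (n + 1)) : c j + n ≤ c (Fin.last n) + j :=
    p.apply_add_index_le_apply_add_index_nat j (Fin.last n) (Fin.le_last j)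
  by_cases h0 : c 0 = 0
  · by_cases hl : c (Fin.last n) = n + 1
    · exact Or.inr (Or.inr ⟨h0, hl⟩)
    · exact Or.inl fun j => by have := from_zero j; have := to_last j; omega
  · exact Or.inr (Or.inl fun j => by have := from_zero j; have := to_last j; omega)

section Interlacing

variable {α : Type*} [LinearOrder α] {k : ℕ} {t t' : Fin k → α}

def countLE (t : Fin k → α) (x : α) : ℕ := #{j | t j ≤ x}

theorem countLE_le (t : Fin k → α) (x : α) : countLE t x ≤ k :=
  (card_filter_le _ _).trans_eq (card_fin k)

theorem countLE_mono (t : Fin k → α) : Monotone (countLE t) := fun _ _ hxy =>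
  card_le_card (monotone_filter_right _ fun _ _ h => h.trans hxy)

theorem Monotone.le_iff_lt_countLE (ht : Monotone t) (i : Fin k) (x : α) :
    t i ≤ x ↔ (i : ℕ) < countLE t x := by
  unfold countLE
  constructor
  · intro h
    calc (i : ℕ) < #(Iic i) := by simp
      _ ≤ #{j | t j ≤ x} := card_le_card fun j hj => by
        simp only [mem_Iic] at hj
        simpa using (ht hj).trans h
  · contrapose!
    intro h
    calc #{j | t j ≤ x} ≤ #(Iio i) := card_le_card fun j hj => by
          simp only [mem_filter, mem_univ, true_and] at hj
          simpa using lt_of_not_ge fun hij => (h.trans_le (ht hij)).not_ge hj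
      _ = i := Fin.card_Iio i

theorem Monotone.lt_iff_countLE_le (ht : Monotone t) (i : Fin k) (x : α) :
    x < t i ↔ countLE t x ≤ i := by
  rw [← not_le, ht.le_iff_lt_countLE, not_lt]

theorem of_ite_lt_eq_stepMatrix {R : Type*} [One R] (ht : Monotone t) (ζ : R) :
    (Matrix.of fun i j => if t' j < t i then ζ else 1) =
      stepMatrix ζ fun j => countLE t (t' j) := by
  ext i j
  simp only [Matrix.of_apply, stepMatrix, ht.lt_iff_countLE_le]
  split_ifs <;> first | rfl | omega

theorem le_lt_interlaced_iff_countLE_eq_add_one (ht : Monotone t) :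
    ((∀ i, t i ≤ t' i) ∧ ∀ i j : Fin k, (i : ℕ) + 1 = (j : ℕ) → t' i < t j) ↔
      ∀ j, countLE t (t' j) = (j : ℕ) + 1 := by
  simp only [ht.le_iff_lt_countLE, ht.lt_iff_countLE_le]
  constructor
  · rintro ⟨hle, hlt⟩ j
    have := hle j
    have := countLE_le t (t' j)
    by_cases hj : (j : ℕ) + 1 < k
    · have : countLE t (t' j) ≤ j + 1 := hlt j ⟨j + 1, hj⟩ rfl
      omega
    · omega
  · intro h
    exact ⟨fun i => by rw [h]; omega, fun i j hij => by rw [h]; omega⟩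

theorem lt_le_interlaced_iff_countLE_eq (ht : Monotone t) :
    ((∀ i, t' i < t i) ∧ ∀ i j : Fin k, (i : ℕ) + 1 = (j : ℕ) → t i ≤ t' j) ↔
      ∀ j, countLE t (t' j) = (j : ℕ) := by
  simp only [ht.le_iff_lt_countLE, ht.lt_iff_countLE_le]
  constructor
  · rintro ⟨hle, hlt⟩ j
    have := hle j
    by_cases hj : (j : ℕ) = 0
    · omega
    · have : (j : ℕ) - 1 < countLE t (t' j) :=
        hlt ⟨j - 1, by omega⟩ j (Nat.sub_add_cancel (Nat.one_le_iff_ne_zero.mpr hj))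
      omega
  · intro h
    exact ⟨fun i => by rw [h], fun i j hij => by rw [h]; omega⟩

end Interlacing

theorem bead_interlacing_det_general (k : ℕ) (hk : 0 < k) (ζ : ℂ) (t t' : Fin k → ℝ)
    (ht : Monotone t) (ht' : Monotone t') :
    (((∀ i, t i ≤ t' i) ∧ ∀ i j : Fin k, (i : ℕ) + 1 = (j : ℕ) → t' i < t j) →
      Matrix.det (Matrix.of fun i j : Fin k => if t' j < t i then ζ else 1)
        = (1 - ζ) ^ (k - 1)) ∧
    (((∀ i, t' i < t i) ∧ ∀ i j : Fin k, (i : ℕ) + 1 = (j : ℕ) → t i ≤ t' j) →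
      Matrix.det (Matrix.of fun i j : Fin k => if t' j < t i then ζ else 1)
        = (-1) ^ (k - 1) * ζ * (1 - ζ) ^ (k - 1)) ∧
    ((¬ ((∀ i, t i ≤ t' i) ∧ ∀ i j : Fin k, (i : ℕ) + 1 = (j : ℕ) → t' i < t j) ∧
      ¬ ((∀ i, t' i < t i) ∧ ∀ i j : Fin k, (i : ℕ) + 1 = (j : ℕ) → t i ≤ t' j)) →
      Matrix.det (Matrix.of fun i j : Fin k => if t' j < t i then ζ else 1) = 0) := by
  obtain ⟨n, rfl⟩ : ∃ n, k = n + 1 := ⟨k - 1, by omega⟩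
  rw [of_ite_lt_eq_stepMatrix ht, le_lt_interlaced_iff_countLE_eq_add_one ht,
    lt_le_interlaced_iff_countLE_eq ht, Nat.add_sub_cancel]
  set c := fun j => countLE t (t' j)
  refine ⟨fun h => ?_, fun h => ?_, fun ⟨h1, h2⟩ => ?_⟩
  · rw [show c = fun j : Fin (n + 1) => (j : ℕ) + 1 from funext h, det_stepMatrix_val_add_one]
  · rw [show c = fun j : Fin (n + 1) => (j : ℕ) from funext h, det_stepMatrix_val]
  · by_cases hinj : Function.Injective c
    · have hc : StrictMono c := ((countLE_mono t).comp ht').strictMono_of_injective hinj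
      rcases hc.fin_trichotomy (countLE_le t _) with h | h | ⟨h0, hl⟩
      · exact absurd h h2
      · exact absurd h h1
      · exact det_stepMatrix_eq_zero_of_eq_zero_of_le ζ h0 hl.ge
    · exact det_stepMatrix_eq_zero_of_not_injective ζ hinj

theorem bead_interlacing_det (k : ℕ) (hk : 0 < k) (ζ : ℂ) (t t' : Fin k → ℝ)
    (ht : Monotone t) (ht' : Monotone t')
    (ht01 : ∀ i, t i ∈ Set.Ico (0 : ℝ) 1) (ht'01 : ∀ i, t' i ∈ Set.Ico (0 : ℝ) 1) :
    (((∀ i, t i ≤ t' i) ∧ ∀ i j : Fin k, (i : ℕ) + 1 = (j : ℕ) → t' i < t j) →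
      Matrix.det (Matrix.of fun i j : Fin k => if t' j < t i then ζ else 1)
        = (1 - ζ) ^ (k - 1)) ∧
    (((∀ i, t' i < t i) ∧ ∀ i j : Fin k, (i : ℕ) + 1 = (j : ℕ) → t i ≤ t' j) →
      Matrix.det (Matrix.of fun i j : Fin k => if t' j < t i then ζ else 1)
        = (-1) ^ (k - 1) * ζ * (1 - ζ) ^ (k - 1)) ∧
    ((¬ ((∀ i, t i ≤ t' i) ∧ ∀ i j : Fin k, (i : ℕ) + 1 = (j : ℕ) → t' i < t j) ∧
      ¬ ((∀ i, t' i < t i) ∧ ∀ i j : Fin k, (i : ℕ) + 1 = (j : ℕ) → t i ≤ t' j)) →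
      Matrix.det (Matrix.of fun i j : Fin k => if t' j < t i then ζ else 1) = 0) :=
  bead_interlacing_det_general k hk ζ t t' ht ht'
end

section
/- Let n ≥ 1, ℓ ≥ 0, and let N be a positive integer not divisible by n. Then Σ_{S ⊆ μ_n, #S = ℓ} (Σ_{z ∈ S} z)^N = 0, where the outer sum is over all subsets S of the n-th roots of unity of cardinality ℓ. -/
/-- If `N` is not divisible by `n`, then the sum over all subsets `S` of the `n`-th roots of
unity of cardinality `ℓ` of `(∑_{z∈S} z)^N` vanishes. -/
theorem roots_subset_power_sum_eq_zero (n ℓ N : ℕ) (hn : 1 ≤ n) (hN : 0 < N)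
    (hdvd : ¬ n ∣ N) :
    ∑ S ∈ (Polynomial.nthRoots n (1 : ℂ)).toFinset.powersetCard ℓ,
      (∑ z ∈ S, z) ^ N = 0 := by
  set R := (Polynomial.nthRoots n (1 : ℂ)).toFinset with hR
  obtain ⟨ω, hω⟩ : ∃ ω : ℂ, IsPrimitiveRoot ω n :=
    ⟨_, Complex.isPrimitiveRoot_exp n (by omega)⟩
  have hn0 : n ≠ 0 := by omega
  have hω0 : ω ≠ 0 := hω.ne_zero hn0
  have hmem : ∀ z : ℂ, z ∈ R ↔ z ^ n = 1 := by
    intro z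
    simp [hR, Polynomial.mem_nthRoots (show 0 < n by omega)]
  have hclose : ∀ (c : ℂ), c ^ n = 1 → ∀ S ∈ R.powersetCard ℓ,
      S.image (fun z => c * z) ∈ R.powersetCard ℓ := by
    intro c hc S hS
    have hc0 : c ≠ 0 := by
      intro h; rw [h, zero_pow hn0] at hc; exact zero_ne_one hc
    rw [Finset.mem_powersetCard] at hS ⊢
    constructor
    · intro z hz
      simp only [Finset.mem_image] at hz
      obtain ⟨y, hy, rfl⟩ := hz
      rw [hmem]
      rw [mul_pow, hc, (hmem y).1 (hS.1 hy), one_mul]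
    · rw [Finset.card_image_of_injective _ (mul_right_injective₀ hc0), hS.2]
  have hωn : ω ^ n = 1 := hω.pow_eq_one
  have hωin : (ω⁻¹) ^ n = 1 := by
    rw [inv_pow, hωn, inv_one]
  have key : ∑ S ∈ R.powersetCard ℓ, (∑ z ∈ S, z) ^ N
      = ω ^ N * ∑ S ∈ R.powersetCard ℓ, (∑ z ∈ S, z) ^ N := by
    rw [Finset.mul_sum]
    refine Finset.sum_nbij' (fun S => S.image (fun z => ω⁻¹ * z))
        (fun S => S.image (fun z => ω * z)) (hclose _ hωin) (hclose _ hωn) ?_ ?_ ?_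
    · intro S hS
      simp only [Finset.image_image]
      have : ((fun z => ω * z) ∘ fun z => ω⁻¹ * z) = id := by
        funext z; simp [← mul_assoc, mul_inv_cancel₀ hω0]
      rw [this, Finset.image_id]
    · intro S hS
      simp only [Finset.image_image]
      have : ((fun z => ω⁻¹ * z) ∘ fun z => ω * z) = id := by
        funext z; simp [← mul_assoc, inv_mul_cancel₀ hω0]
      rw [this, Finset.image_id]
    · intro S hS
      rw [Finset.sum_image (fun x _ y _ h => mul_right_injective₀ (inv_ne_zero hω0) h),
        ← Finset.mul_sum, mul_pow, ← mul_assoc, ← mul_pow, mul_inv_cancel₀ hω0, one_pow,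
        one_mul]
  have hωN : ω ^ N ≠ 1 := fun h => hdvd (hω.pow_eq_one_iff_dvd N |>.1 h)
  have h2 : (1 - ω ^ N) * ∑ S ∈ R.powersetCard ℓ, (∑ z ∈ S, z) ^ N = 0 := by
    rw [sub_mul, one_mul]; exact sub_eq_zero.2 key
  rcases mul_eq_zero.1 h2 with h | h
  · exact absurd (sub_eq_zero.1 h).symm hωN
  · exact h
end

section
/- For every subset S of the n-th roots of unity, |Σ_{z ∈ S} z| ≤ sin(π·#S/n)/sin(π/n), with equality when S is a set of #S consecutive roots around the circle. (It suffices to prove the inequality for the real part after a rotation.) -/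
/-!
Choose `θ` with `‖∑ z ∈ S, z‖ = Re (e^{iθ} ∑ z ∈ S, z)` and index the `n`-th roots of unity as
`e^{2πi(j₀ + j)/n}`, `0 ≤ j < n`, with `j₀` chosen so that the first `k = #S` of them form the arc
of `k` roots closest to the direction `e^{-iθ}`. Then `Re (e^{iθ} z)` is at least `cos (πk/n)` on
that arc and at most `cos (πk/n)` off it, so exchanging elements of `S` for elements of the arc
can only increase the sum. The sum over the arc is a geometric sum of modulus
`sin (πk/n) / sin (π/n)`.
-/

open Finset Complex Polynomial
open scoped Real

theorem Finset.sum_le_sum_of_card_eq_of_sdiff_le {ι M : Type*} [DecidableEq ι] [AddCommMonoid M]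
    [PartialOrder M] [IsOrderedAddMonoid M] {s t : Finset ι} {f : ι → M} (c : M)
    (hst : #s = #t) (hs : ∀ i ∈ s \ t, f i ≤ c) (ht : ∀ i ∈ t \ s, c ≤ f i) :
    ∑ i ∈ s, f i ≤ ∑ i ∈ t, f i := by
  calc ∑ i ∈ s, f i ≤ ∑ i ∈ s ∩ t, f i + #(s \ t) • c := by
        grw [← sum_inter_add_sum_sdiff s t, sum_le_card_nsmul _ _ _ hs]
    _ = ∑ i ∈ t ∩ s, f i + #(t \ s) • c := by rw [inter_comm, card_sdiff_comm hst]
    _ ≤ ∑ i ∈ t, f i := by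
        grw [← sum_inter_add_sum_sdiff t s, ← card_nsmul_le_sum _ _ _ ht]

theorem Real.cos_pi_mul_div_le_cos {k n u : ℝ} (hn : 0 < n) (hkn : k ≤ n) (hu : |u| ≤ k / 2) :
    cos (π * k / n) ≤ cos (2 * π * u / n) := by
  rw [← cos_abs (2 * π * u / n)]
  have hθ : |2 * π * u / n| ≤ π * k / n := by
    rw [abs_div, abs_mul, abs_of_pos (by positivity : 0 < 2 * π), abs_of_pos hn]
    rw [div_le_div_iff_of_pos_right hn]; nlinarith [pi_pos]
  refine cos_le_cos_of_nonneg_of_le_pi (abs_nonneg _) ?_ hθ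
  rw [div_le_iff₀ hn]; nlinarith [pi_pos]

theorem Real.cos_le_cos_pi_mul_div {k n u : ℝ} (hn : 0 < n) (hk : 0 ≤ k) (hu₁ : k / 2 ≤ u)
    (hu₂ : u ≤ n - k / 2) : cos (2 * π * u / n) ≤ cos (π * k / n) := by
  have hθ₁ : π * k / n ≤ 2 * π * u / n := by
    rw [div_le_div_iff_of_pos_right hn]; nlinarith [pi_pos]
  have hθ₂ : π * k / n ≤ 2 * π - 2 * π * u / n := by
    rw [le_sub_iff_add_le, ← add_div, div_le_iff₀ hn]; nlinarith [pi_pos]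
  rcases le_total (2 * π * u / n) π with h | h
  · exact cos_le_cos_of_nonneg_of_le_pi (by positivity) h hθ₁
  · rw [← cos_two_pi_sub]
    exact cos_le_cos_of_nonneg_of_le_pi (by positivity) (by linarith) hθ₂

theorem sum_cos_le_sum_range_cos {n : ℕ} {A : Finset ℕ} (hA : A ⊆ range n) {x : ℝ}
    (hx₁ : -(#A / 2 : ℝ) ≤ x) (hx₂ : x < 1 - #A / 2) :
    ∑ j ∈ A, Real.cos (2 * π * (x + j) / n) ≤
      ∑ j ∈ range #A, Real.cos (2 * π * (x + j) / n) := by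
  have hkn : (#A : ℝ) ≤ n := by exact_mod_cast (card_le_card hA).trans (card_range n).le
  refine sum_le_sum_of_card_eq_of_sdiff_le (Real.cos (π * #A / n)) (card_range _).symm ?_ ?_
  · intro j hj
    obtain ⟨hjA, hjk⟩ := mem_sdiff.1 hj
    have hjn : (j : ℝ) + 1 ≤ n := by exact_mod_cast mem_range.1 (hA hjA)
    have hkj : (#A : ℝ) ≤ j := by exact_mod_cast not_lt.1 (mem_range.not.1 hjk)
    exact Real.cos_le_cos_pi_mul_div (by linarith) (by positivity) (by linarith) (by linarith)
  · intro j hj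
    have hjk : (j : ℝ) + 1 ≤ #A := by exact_mod_cast mem_range.1 (mem_sdiff.1 hj).1
    exact Real.cos_pi_mul_div_le_cos (by linarith) hkn (abs_le.2 ⟨by linarith, by linarith⟩)

theorem IsPrimitiveRoot.exists_subset_range_sum_eq {R : Type*} [CommRing R] [IsDomain R]
    [DecidableEq R] {n : ℕ} {ζ α : R} (hζ : IsPrimitiveRoot ζ n) (hα : α ^ n = 1)
    {S : Finset R} (hS : S ⊆ (nthRoots n (1 : R)).toFinset) :
    ∃ A ⊆ range n, #A = #S ∧ ∑ z ∈ S, z = ∑ j ∈ A, ζ ^ j * α := by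
  rw [hζ.nthRoots_eq hα, Multiset.toFinset_map, Multiset.toFinset_range, subset_image_iff] at hS
  obtain ⟨A, hA, rfl⟩ := hS
  have hinj : Set.InjOn (ζ ^ · * α) A := fun i hi j hj hij => by
    have hi := mem_range.1 (hA hi)
    have hα0 : α ≠ 0 := ne_zero_pow (by omega) (hα ▸ one_ne_zero)
    exact hζ.pow_inj hi (mem_range.1 (hA hj)) (mul_right_cancel₀ hα0 hij)
  exact ⟨A, hA, (card_image_of_injOn hinj).symm, sum_image hinj⟩

theorem norm_sum_range_exp_two_pi_I {n : ℕ} (hn : 2 ≤ n) (x : ℝ) {ℓ : ℕ} (hℓ : ℓ ≤ n) :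
    ‖∑ j ∈ range ℓ, exp (2 * π * I * ((x : ℂ) + j) / n)‖ =
      Real.sin (π * ℓ / n) / Real.sin (π / n) := by
  set ζ := exp (2 * π * I / n)
  have hζ : IsPrimitiveRoot ζ n := isPrimitiveRoot_exp n (by omega)
  have hterm : ∀ j : ℕ, exp (2 * π * I * ((x : ℂ) + j) / n) = exp (2 * π * I * x / n) * ζ ^ j :=
    fun j => by rw [← exp_nat_mul, ← exp_add]; congr 1; ring
  have hchord : ∀ m : ℕ, m ≤ n → ‖ζ ^ m - 1‖ = 2 * Real.sin (π * m / n) := fun m hm => by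
    rw [← exp_nat_mul, show m * (2 * π * I / n) = I * (2 * π * m / n : ℝ) by push_cast; ring,
      norm_exp_I_mul_ofReal_sub_one, Real.norm_eq_abs, abs_of_nonneg]
    · ring_nf
    · refine mul_nonneg zero_le_two (Real.sin_nonneg_of_nonneg_of_le_pi (by positivity) ?_)
      have : (m : ℝ) ≤ n := by exact_mod_cast hm
      rw [div_div, div_le_iff₀ (by positivity)]; nlinarith [Real.pi_pos]
  simp_rw [hterm, ← mul_sum]
  rw [norm_mul, geom_sum_eq (hζ.ne_one (by omega)), norm_div, hchord ℓ hℓ, ← pow_one ζ,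
    hchord 1 (by omega)]
  simp [norm_exp, mul_div_mul_left _ _ (two_ne_zero (α := ℝ))]

theorem Complex.exists_re_exp_mul_I_mul_eq_norm (w : ℂ) :
    ∃ θ : ℝ, (exp (θ * I) * w).re = ‖w‖ := by
  refine ⟨-arg w, ?_⟩
  nth_rw 2 [← norm_mul_exp_arg_mul_I w]
  rw [mul_left_comm, ← exp_add, ofReal_neg, neg_mul, neg_add_cancel, exp_zero, mul_one, ofReal_re]

theorem re_exp_mul_sum_le_of_subset_nthRoots {n : ℕ} (hn : 2 ≤ n) {S : Finset ℂ}
    (hS : S ⊆ (nthRoots n (1 : ℂ)).toFinset) (θ : ℝ) :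
    (exp (θ * I) * ∑ z ∈ S, z).re ≤ Real.sin (π * #S / n) / Real.sin (π / n) := by
  have hn0 : (n : ℂ) ≠ 0 := by norm_cast; omega
  -- `θ` measured in units of `2π/n`; the ceiling puts `j₀ + y` in `[-#S/2, 1 - #S/2)`.
  set y := θ * n / (2 * π)
  set j₀ : ℤ := ⌈-(#S / 2 : ℝ) - y⌉
  set α := exp (2 * π * I * (j₀ : ℝ) / n)
  have hα : α ^ n = 1 := by
    rw [← exp_nat_mul, show n * (2 * π * I * (j₀ : ℝ) / n) = j₀ * (2 * π * I) by
      push_cast; field_simp]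
    exact exp_int_mul_two_pi_mul_I j₀
  obtain ⟨A, hA, hcard, hsum⟩ :=
    (isPrimitiveRoot_exp n (by omega)).exists_subset_range_sum_eq hα hS
  have hterm : ∀ j : ℕ, exp (2 * π * I / n) ^ j * α = exp (2 * π * I * ((j₀ : ℝ) + j) / n) :=
    fun j => by rw [← exp_nat_mul, ← exp_add]; congr 1; ring
  have hre : ∀ j : ℕ, (exp (θ * I) * exp (2 * π * I * ((j₀ : ℝ) + j) / n)).re =
      Real.cos (2 * π * (j₀ + y + j) / n) := fun j => by
    rw [← exp_add, ← exp_ofReal_mul_I_re]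
    congr 3
    simp only [y]
    push_cast
    field_simp
    ring
  have hj₀ : -(#S / 2 : ℝ) - y ≤ j₀ := Int.le_ceil _
  have hj₀' : (j₀ : ℝ) < -(#S / 2 : ℝ) - y + 1 := Int.ceil_lt_add_one _
  have hAn : #A ≤ n := (card_le_card hA).trans (card_range n).le
  rw [hsum, ← hcard]
  calc (exp (θ * I) * ∑ j ∈ A, exp (2 * π * I / n) ^ j * α).re
      = ∑ j ∈ A, Real.cos (2 * π * (j₀ + y + j) / n) := by
        simp only [mul_sum, re_sum, hterm, hre]
    _ ≤ ∑ j ∈ range #A, Real.cos (2 * π * (j₀ + y + j) / n) :=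
        sum_cos_le_sum_range_cos hA (by rw [hcard]; linarith) (by rw [hcard]; linarith)
    _ = (exp (θ * I) * ∑ j ∈ range #A, exp (2 * π * I * ((j₀ : ℝ) + j) / n)).re := by
        simp only [mul_sum, re_sum, hre]
    _ ≤ ‖∑ j ∈ range #A, exp (2 * π * I * ((j₀ : ℝ) + j) / n)‖ := by
        grw [re_le_norm, norm_mul, norm_exp_ofReal_mul_I, one_mul]
    _ = Real.sin (π * #A / n) / Real.sin (π / n) := norm_sum_range_exp_two_pi_I hn _ hAn

theorem roots_sum_abs_le_general (n : ℕ) (hn : 2 ≤ n)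
    (S : Finset ℂ) (hS : S ⊆ (Polynomial.nthRoots n (1 : ℂ)).toFinset) :
    ‖∑ z ∈ S, z‖ ≤ Real.sin (Real.pi * S.card / n) / Real.sin (Real.pi / n) ∧
    (∀ j₀ : ℤ, ∀ ℓ : ℕ, 1 ≤ ℓ → ℓ ≤ n - 1 →
      ‖∑ j ∈ Finset.range ℓ,
          Complex.exp (2 * Real.pi * Complex.I * ((j₀ : ℂ) + (j : ℂ)) / n)‖
        = Real.sin (Real.pi * ℓ / n) / Real.sin (Real.pi / n)) := by
  refine ⟨?_, fun j₀ ℓ _ hℓ => ?_⟩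
  · obtain ⟨θ, hθ⟩ := exists_re_exp_mul_I_mul_eq_norm (∑ z ∈ S, z)
    exact hθ ▸ re_exp_mul_sum_le_of_subset_nthRoots hn hS θ
  · simpa using norm_sum_range_exp_two_pi_I hn j₀ (ℓ := ℓ) (by omega)

/-- Consecutive arcs maximize the modulus of a sum of a fixed number of `n`-th roots of unity:
for `S ⊆ μ_n` with `1 ≤ #S ≤ n-1`, `|∑_{z∈S} z| ≤ sin(π #S/n)/sin(π/n)`, with equality for
consecutive sets of roots. -/
theorem roots_sum_abs_le (n : ℕ) (hn : 2 ≤ n)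
    (S : Finset ℂ) (hS : S ⊆ (Polynomial.nthRoots n (1 : ℂ)).toFinset)
    (h1 : 1 ≤ S.card) (h2 : S.card ≤ n - 1) :
    ‖∑ z ∈ S, z‖ ≤ Real.sin (Real.pi * S.card / n) / Real.sin (Real.pi / n) ∧
    (∀ j₀ : ℤ, ∀ ℓ : ℕ, 1 ≤ ℓ → ℓ ≤ n - 1 →
      ‖∑ j ∈ Finset.range ℓ,
          Complex.exp (2 * Real.pi * Complex.I * ((j₀ : ℂ) + (j : ℂ)) / n)‖
        = Real.sin (Real.pi * ℓ / n) / Real.sin (Real.pi / n)) :=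
  roots_sum_abs_le_general n hn S hS
end

section
/- Fix n ≥ 2 and β ∈ ℂ with e^{-β} ≠ 1. For each n-th root of unity z and each integer m, the function φ_{z,m}(t,h) := n^{-1/2} z^h e^{-2πi m t} on [0,1) × ℤ/nℤ is an eigenfunction of the integral operator C^{β,θ₂} defined by (C^{β,θ₂} f)(t,h) = Σ_{h'} ∫₀¹ e^{θ₂ π i/n} 1{h' = h+1 mod n} · (e^{-β[t'-t]}/(1-e^{-β})) f(t',h') dt', with eigenvalue e^{θ₂ π i/n} z / (β + 2πi m), where [s] := s + 1{s < 0} denotes the residue of s mod 1. -/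
/-!
The kernel of `C^{β,θ₂}` depends only on `h' - h ∈ ℤ/nℤ` and on `t' - t` modulo `1`, because
`[t' - t]` is the fractional part of `t' - t` for `t, t' ∈ [0,1)`. So the operator is a convolution
on `ℝ/ℤ × ℤ/nℤ`, and the characters `φ_{z,m}` are eigenfunctions whose eigenvalues are Fourier
coefficients of the kernel: the shift `h ↦ h + 1` contributes `z` (as `z ^ n = 1`), and the circle
contributes `∫₀¹ e^{-β s} e^{-2πims} ds = (1 - e^{-β}) / (β + 2πim)`.
-/

/-- The residue mod 1 of a real number `s ∈ (-1,1)`: `[s] = s + 1_{s<0}`. -/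
noncomputable def resMod1 (s : ℝ) : ℝ := s + (if s < 0 then 1 else 0)

/-- The eigenfunction `φ_{z,m}(t,h) = n^{-1/2} z^h e^{-2πimt}` on `[0,1) × ℤ/nℤ`. -/
noncomputable def phiEig (n : ℕ) (z : ℂ) (m : ℤ) (t : ℝ) (h : ZMod n) : ℂ :=
  ((1 / Real.sqrt n : ℝ) : ℂ) * z ^ (h.val) *
    Complex.exp (-2 * Real.pi * Complex.I * (m : ℂ) * (t : ℂ))

open Complex Set intervalIntegral
open scoped Real

lemma resMod1_eq_fract {s : ℝ} (h₁ : -1 ≤ s) (h₂ : s < 1) : resMod1 s = Int.fract s := by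
  refine (Int.fract_eq_iff.2 ?_).symm
  unfold resMod1
  split_ifs with hs
  · exact ⟨by linarith, by linarith, -1, by push_cast; ring⟩
  · exact ⟨by linarith, by linarith, 0, by simp⟩

lemma exp_neg_two_pi_I_mul_intCast (m : ℤ) : exp (-2 * π * I * m) = 1 := by
  rw [← exp_int_mul_two_pi_mul_I (-m)]
  push_cast
  ring_nf

lemma exp_neg_add_two_pi_I_mul_intCast (β : ℂ) (m : ℤ) :
    exp (-(β + 2 * π * I * m)) = exp (-β) := by
  rw [show -(β + 2 * π * I * m) = -β + -2 * π * I * m by ring, exp_add,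
    exp_neg_two_pi_I_mul_intCast, mul_one]

lemma add_two_pi_I_mul_intCast_ne_zero {β : ℂ} (hβ : exp (-β) ≠ 1) (m : ℤ) :
    β + 2 * π * I * m ≠ 0 := fun h ↦ hβ <| by
  rw [← exp_neg_add_two_pi_I_mul_intCast β m, h, neg_zero, Complex.exp_zero]

lemma periodic_exp_fract_mul_fourier (β : ℂ) (m : ℤ) :
    Function.Periodic (fun s : ℝ ↦ exp (-β * Int.fract s) * exp (-2 * π * I * m * s)) 1 := by
  intro s
  simp only [Int.fract_add_one, ofReal_add, ofReal_one, mul_add, mul_one, Complex.exp_add,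
    exp_neg_two_pi_I_mul_intCast]

lemma integral_exp_fract_mul_fourier {β : ℂ} {m : ℤ} (hc : β + 2 * π * I * m ≠ 0) :
    ∫ s in (0 : ℝ)..1, exp (-β * Int.fract s) * exp (-2 * π * I * m * s)
      = (1 - exp (-β)) / (β + 2 * π * I * m) := by
  have hfract : EqOn (fun s : ℝ ↦ exp (-β * Int.fract s) * exp (-2 * π * I * m * s))
      (fun s : ℝ ↦ exp (-(β + 2 * π * I * m) * s)) (Ioo 0 1) := fun s hs ↦ by
    simp only [Int.fract_eq_self.2 ⟨hs.1.le, hs.2⟩, ← Complex.exp_add]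
    ring_nf
  rw [integral_congr_Ioo_of_le zero_le_one hfract, integral_exp_mul_complex (neg_ne_zero.2 hc),
    ofReal_one, mul_one, ofReal_zero, mul_zero, Complex.exp_zero,
    exp_neg_add_two_pi_I_mul_intCast, div_neg, ← neg_div, neg_sub]

lemma integral_exp_resMod1_mul_fourier {β : ℂ} {m : ℤ} (hc : β + 2 * π * I * m ≠ 0) {t : ℝ}
    (ht : t ∈ Ico (0 : ℝ) 1) :
    ∫ t' in (0 : ℝ)..1, exp (-β * (resMod1 (t' - t) : ℂ)) * exp (-2 * π * I * m * t')
      = (1 - exp (-β)) / (β + 2 * π * I * m) * exp (-2 * π * I * m * t) := by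
  set F : ℝ → ℂ := fun s ↦ exp (-β * Int.fract s) * exp (-2 * π * I * m * s)
  calc _ = ∫ t' in (0 : ℝ)..1, exp (-2 * π * I * m * t) * F (t' - t) := by
        refine integral_congr_Ioo_of_le zero_le_one fun t' ht' ↦ ?_
        rw [resMod1_eq_fract (s := t' - t) (by linarith [ht.2, ht'.1]) (by linarith [ht.1, ht'.2]),
          mul_left_comm]
        congr 1
        rw [← Complex.exp_add]
        push_cast
        ring_nf
    _ = exp (-2 * π * I * m * t) * ∫ s in (0 : ℝ)..1, F s := by
        rw [integral_const_mul, integral_comp_sub_right, zero_sub, sub_eq_neg_add,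
          (periodic_exp_fract_mul_fourier β m).intervalIntegral_add_eq (-t) 0, zero_add]
    _ = _ := by rw [integral_exp_fract_mul_fourier hc, mul_comm]

lemma pow_val_add_one_of_pow_eq_one {M : Type*} [Monoid M] {n : ℕ} [NeZero n] {z : M}
    (hz : z ^ n = 1) (h : ZMod n) : z ^ (h + 1).val = z ^ h.val * z := by
  rw [ZMod.val_add, ← pow_eq_pow_mod _ hz, ZMod.val_one_eq_one_mod, pow_add,
    ← pow_eq_pow_mod _ hz, pow_one]

theorem phi_eigenfunction_general (n : ℕ) [NeZero n] (θ₂ : ℕ)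
    (β : ℂ) (hβ : Complex.exp (-β) ≠ 1) (z : ℂ) (hz : z ^ n = 1) (m : ℤ)
    (t : ℝ) (ht : t ∈ Set.Ico (0 : ℝ) 1) (h : ZMod n) :
    ∑ h' : ZMod n, ∫ t' in (0 : ℝ)..1,
        Complex.exp ((θ₂ : ℂ) * Real.pi * Complex.I / n) *
        (if h' = h + 1 then 1 else 0) *
        (Complex.exp (-β * ((resMod1 (t' - t) : ℝ) : ℂ)) / (1 - Complex.exp (-β))) *
        phiEig n z m t' h'
    = (Complex.exp ((θ₂ : ℂ) * Real.pi * Complex.I / n) * z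
        / (β + 2 * Real.pi * Complex.I * (m : ℂ))) * phiEig n z m t h := by
  set ω := exp ((θ₂ : ℂ) * π * I / n)
  rw [Finset.sum_eq_single_of_mem (h + 1) (Finset.mem_univ _) fun h' _ hh' ↦ by simp [hh']]
  calc _ = ω * ((1 / √n : ℝ) : ℂ) * z ^ (h + 1).val / (1 - exp (-β)) *
        ∫ t' in (0 : ℝ)..1, exp (-β * (resMod1 (t' - t) : ℂ)) * exp (-2 * π * I * m * t') := by
        rw [← integral_const_mul]
        congr 1 with t'
        rw [if_pos rfl, mul_one, phiEig]
        ring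
    _ = _ := by
        rw [integral_exp_resMod1_mul_fourier (add_two_pi_I_mul_intCast_ne_zero hβ m) ht,
          pow_val_add_one_of_pow_eq_one hz]
        unfold phiEig
        field_simp

/-- `φ_{z,m}` is an eigenfunction of the operator `C^{β,θ₂}` with eigenvalue
`e^{θ₂πi/n} z/(β + 2πim)`. -/
theorem phi_eigenfunction (n : ℕ) [NeZero n] (hn : 2 ≤ n) (θ₂ : ℕ) (hθ : θ₂ = 0 ∨ θ₂ = 1)
    (β : ℂ) (hβ : Complex.exp (-β) ≠ 1) (z : ℂ) (hz : z ^ n = 1) (m : ℤ)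
    (t : ℝ) (ht : t ∈ Set.Ico (0 : ℝ) 1) (h : ZMod n) :
    ∑ h' : ZMod n, ∫ t' in (0 : ℝ)..1,
        Complex.exp ((θ₂ : ℂ) * Real.pi * Complex.I / n) *
        (if h' = h + 1 then 1 else 0) *
        (Complex.exp (-β * ((resMod1 (t' - t) : ℝ) : ℂ)) / (1 - Complex.exp (-β))) *
        phiEig n z m t' h'
    = (Complex.exp ((θ₂ : ℂ) * Real.pi * Complex.I / n) * z
        / (β + 2 * Real.pi * Complex.I * (m : ℂ))) * phiEig n z m t h :=
  phi_eigenfunction_general n θ₂ β hβ z hz m t ht h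
end

section
/- For β ∈ ℂ with e^{-β} ≠ 1 and any integer m, ∫₀¹ (e^{-β [t'-t]} / (1 - e^{-β})) e^{-2πi m t'} dt' = e^{-2πi m t} / (β + 2πi m), for every t ∈ [0,1), where [s] = s + 1{s<0} is the residue of s mod 1, and β + 2πi m ≠ 0. -/
/-!
Put `c = β + 2πim` and `s = t + [t' - t]`. Since `s - t'` is an integer (`0` or `1`), the
integrand is `e^{βt} e^{-cs} / (1 - e^{-β})`, and as `t'` runs over `[0,1)` the point `s` runs
over `[t, t+1)`. Hence the integral is
`e^{βt} ∫_t^{t+1} e^{-cs} ds / (1 - e^{-β}) = e^{(β-c)t} (1 - e^{-c}) / (c (1 - e^{-β}))`,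
and `e^{-c} = e^{-β}` cancels the denominator.
-/

open MeasureTheory Set

lemma resMod1_of_nonneg {s : ℝ} (hs : 0 ≤ s) : resMod1 s = s := by
  simp [resMod1, not_lt.mpr hs]

lemma resMod1_of_neg {s : ℝ} (hs : s < 0) : resMod1 s = s + 1 := by
  simp [resMod1, hs]

lemma exists_int_add_resMod1_sub_eq (x t : ℝ) : ∃ k : ℤ, t + resMod1 (x - t) = x + k := by
  rcases lt_or_ge (x - t) 0 with h | h
  · exact ⟨1, by rw [resMod1_of_neg h]; push_cast; ring⟩
  · exact ⟨0, by rw [resMod1_of_nonneg h]; push_cast; ring⟩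

theorem intervalIntegral_comp_add_resMod1 {E : Type*} [NormedAddCommGroup E] [NormedSpace ℝ E]
    {f : ℝ → E} {t : ℝ} (ht : t ∈ Icc (0 : ℝ) 1) (hf : IntervalIntegrable f volume t (t + 1)) :
    ∫ x in (0 : ℝ)..1, f (t + resMod1 (x - t)) = ∫ x in t..t + 1, f x := by
  obtain ⟨ht0, ht1⟩ := ht
  have h_one : (1 : ℝ) ∈ uIcc t (t + 1) := by
    rw [uIcc_of_le (by linarith)]
    exact ⟨ht1, by linarith⟩
  have hf_left : IntervalIntegrable f volume t 1 := hf.mono_set (uIcc_subset_uIcc_left h_one)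
  have hf_right : IntervalIntegrable f volume 1 (t + 1) := hf.mono_set (uIcc_subset_uIcc_right h_one)
  have h_below : (fun x => f (t + resMod1 (x - t))) =ᵐ[volume.restrict (uIoc 0 t)]
      fun x => f (x + 1) := by
    refine (ae_restrict_iff' measurableSet_uIoc).mpr ?_
    filter_upwards [volume.ae_ne t] with x hxt hx
    rw [uIoc_of_le ht0] at hx
    rw [resMod1_of_neg (by linarith [lt_of_le_of_ne hx.2 hxt])]
    ring_nf
  have h_above : EqOn (fun x => f (t + resMod1 (x - t))) f (uIcc t 1) := by
    intro x hx
    rw [uIcc_of_le ht1] at hx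
    simp only [resMod1_of_nonneg (sub_nonneg.mpr hx.1), add_sub_cancel]
  have hshift : IntervalIntegrable (fun x => f (x + 1)) volume 0 t := by
    simpa using hf_right.comp_add_right 1
  calc ∫ x in (0 : ℝ)..1, f (t + resMod1 (x - t))
      = (∫ x in (0 : ℝ)..t, f (t + resMod1 (x - t))) + ∫ x in t..1, f (t + resMod1 (x - t)) :=
        (intervalIntegral.integral_add_adjacent_intervals
          (hshift.congr_ae h_below.symm) (hf_left.congr (h_above.symm.mono uIoc_subset_uIcc))).symm
    _ = (∫ x in (0 : ℝ)..t, f (x + 1)) + ∫ x in t..1, f x := by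
        rw [intervalIntegral.integral_congr_ae_restrict h_below,
          intervalIntegral.integral_congr h_above]
    _ = ∫ x in t..t + 1, f x := by
        rw [intervalIntegral.integral_comp_add_right, zero_add, add_comm,
          intervalIntegral.integral_add_adjacent_intervals hf_left hf_right]

lemma exp_neg_mul_resMod1_mul_fourier (β : ℂ) (m : ℤ) (x t : ℝ) :
    Complex.exp (-β * ((resMod1 (x - t) : ℝ) : ℂ)) *
        Complex.exp (-2 * Real.pi * Complex.I * (m : ℂ) * (x : ℂ))
      = Complex.exp (β * t) *
        Complex.exp (-(β + 2 * Real.pi * Complex.I * m) * ((t + resMod1 (x - t) : ℝ) : ℂ)) := by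
  obtain ⟨k, hk⟩ := exists_int_add_resMod1_sub_eq x t
  rw [← Complex.exp_add, ← Complex.exp_add, hk, eq_sub_of_add_eq' hk]
  push_cast
  have hperiod : -β * (x + k - t) + -2 * Real.pi * Complex.I * m * x
      = β * t + -(β + 2 * Real.pi * Complex.I * m) * (x + k)
        + (m * k : ℤ) * (2 * Real.pi * Complex.I) := by
    push_cast; ring
  rw [hperiod, Complex.exp_add, Complex.exp_int_mul_two_pi_mul_I, mul_one]

lemma integral_exp_neg_mul_unit_interval {c : ℂ} (hc : c ≠ 0) (t : ℝ) :
    ∫ s in t..t + 1, Complex.exp (-c * s) = Complex.exp (-c * t) * (1 - Complex.exp (-c)) / c := by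
  rw [integral_exp_mul_complex (neg_ne_zero.mpr hc)]
  push_cast
  rw [mul_add, Complex.exp_add]
  field_simp
  ring

/-- `∫₀¹ (e^{-β[t'-t]}/(1-e^{-β})) e^{-2πimt'} dt' = e^{-2πimt}/(β + 2πim)`. -/
theorem kernel_fourier_integral (β : ℂ) (hβ : Complex.exp (-β) ≠ 1) (m : ℤ)
    (t : ℝ) (ht : t ∈ Set.Ico (0 : ℝ) 1) (hden : β + 2 * Real.pi * Complex.I * (m : ℂ) ≠ 0) :
    ∫ t' in (0 : ℝ)..1,
        (Complex.exp (-β * ((resMod1 (t' - t) : ℝ) : ℂ)) / (1 - Complex.exp (-β))) *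
          Complex.exp (-2 * Real.pi * Complex.I * (m : ℂ) * (t' : ℂ))
    = Complex.exp (-2 * Real.pi * Complex.I * (m : ℂ) * (t : ℂ))
        / (β + 2 * Real.pi * Complex.I * (m : ℂ)) := by
  set c : ℂ := β + 2 * Real.pi * Complex.I * (m : ℂ)
  have hexp_c : Complex.exp (-c) = Complex.exp (-β) := by
    rw [show -c = -β + (-m : ℤ) * (2 * Real.pi * Complex.I) by push_cast; ring,
      Complex.exp_add, Complex.exp_int_mul_two_pi_mul_I, mul_one]
  simp_rw [div_mul_eq_mul_div, exp_neg_mul_resMod1_mul_fourier]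
  rw [intervalIntegral.integral_div, intervalIntegral.integral_const_mul,
    intervalIntegral_comp_add_resMod1 (f := fun s : ℝ => Complex.exp (-c * s))
      (Ico_subset_Icc_self ht) ((by fun_prop : Continuous _).intervalIntegrable _ _),
    integral_exp_neg_mul_unit_interval hden, hexp_c,
    show -2 * Real.pi * Complex.I * m * t = β * t + -c * t by ring, Complex.exp_add]
  field_simp
end

section
/- Semigroup/resolvent-type identity: let λ, λ' be distinct complex numbers with e^{-λ} ≠ 1 and e^{-λ'} ≠ 1, and t, t' ∈ [0,1). Then ∫₀¹ (e^{-λ[s-t]}/(1-e^{-λ})) · (e^{-λ'[t'-s]}/(1-e^{-λ'})) ds = (1/(λ-λ')) · [ e^{-λ'[t'-t]}/(1-e^{-λ'}) - e^{-λ[t'-t]}/(1-e^{-λ}) ], where [s] = s + 1{s<0} denotes the residue mod 1. -/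
/-!
Write `K_λ(u) = e^{-λu} / (1 - e^{-λ})`. For almost every `s` the integrand is
`K_λ(fract (s - t)) · K_λ'(fract (t' - s))`, a 1-periodic function of `s`, so shifting by `t`
turns the integral into `∫₀¹ K_λ(u) K_λ'(fract (r - u)) du` with `r = fract (t' - t)`.
On `(0, r)` and on `(r, 1)` the integrand has the form `K_λ(u) K_λ'(b - u)`, whose derivative is
`λ' - λ` times itself, so both pieces are boundary terms divided by `λ' - λ`. These telescope up to
the jump `K(0) - K(1) = 1` of each kernel, which leaves `(K_λ(r) - K_λ'(r)) / (λ' - λ)`.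
-/

open MeasureTheory Set intervalIntegral

lemma Function.Periodic.intervalIntegral_comp_sub {E : Type*} [NormedAddCommGroup E]
    [NormedSpace ℝ E] {f : ℝ → E} {T : ℝ} (hf : Function.Periodic f T) (t : ℝ) :
    ∫ s in 0..T, f (s - t) = ∫ u in 0..T, f u := by
  rw [integral_comp_sub_right, sub_eq_neg_add T, zero_sub, hf.intervalIntegral_add_eq (-t) 0,
    zero_add]

lemma resMod1_eq_fract_s10 {u : ℝ} (hu : u ∈ Ico (-1) 1) : resMod1 u = Int.fract u := by
  obtain ⟨hu₁, hu₂⟩ := hu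
  unfold resMod1
  split_ifs with hneg
  · rw [← Int.fract_add_one, Int.fract_eq_self.2 ⟨by linarith, by linarith⟩]
  · rw [add_zero, Int.fract_eq_self.2 ⟨not_lt.1 hneg, hu₂⟩]

/-- `u ↦ resolventKernel λ (Int.fract u)` is the 1-periodic Green's function of `d/du + λ`. -/
noncomputable def resolventKernel (lam : ℂ) (u : ℝ) : ℂ :=
  Complex.exp (-lam * u) / (1 - Complex.exp (-lam))

@[fun_prop]
lemma continuous_resolventKernel (lam : ℂ) : Continuous (resolventKernel lam) := by
  unfold resolventKernel
  fun_prop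

lemma hasDerivAt_resolventKernel (lam : ℂ) (u : ℝ) :
    HasDerivAt (resolventKernel lam) (-lam * resolventKernel lam u) u := by
  have h : HasDerivAt (fun z : ℂ => Complex.exp (-lam * z) / (1 - Complex.exp (-lam)))
      (Complex.exp (-lam * u) * -lam / (1 - Complex.exp (-lam))) u :=
    (((hasDerivAt_id _).const_mul (-lam)).cexp.div_const _).congr_deriv (by simp)
  exact h.comp_ofReal.congr_deriv (by rw [resolventKernel]; ring)

lemma resolventKernel_zero_sub_one {lam : ℂ} (h : Complex.exp (-lam) ≠ 1) :
    resolventKernel lam 0 - resolventKernel lam 1 = 1 := by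
  rw [resolventKernel, resolventKernel, ← sub_div, Complex.ofReal_zero, Complex.ofReal_one,
    mul_zero, mul_one, Complex.exp_zero]
  exact div_self (sub_ne_zero.2 h.symm)

lemma hasDerivAt_resolventKernel_mul (lam lam' : ℂ) (b u : ℝ) :
    HasDerivAt (fun u => resolventKernel lam u * resolventKernel lam' (b - u))
      ((lam' - lam) * (resolventKernel lam u * resolventKernel lam' (b - u))) u := by
  have h' : HasDerivAt (fun u => resolventKernel lam' (b - u))
      (-(-lam' * resolventKernel lam' (b - u))) u := by
    simpa using (hasDerivAt_resolventKernel lam' (b - u)).comp_const_sub b u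
  exact ((hasDerivAt_resolventKernel lam u).mul h').congr_deriv (by ring)

lemma integral_resolventKernel_mul {lam lam' : ℂ} (hne : lam ≠ lam') (b x y : ℝ) :
    ∫ u in x..y, resolventKernel lam u * resolventKernel lam' (b - u) =
      (resolventKernel lam y * resolventKernel lam' (b - y)
        - resolventKernel lam x * resolventKernel lam' (b - x)) / (lam' - lam) := by
  rw [eq_div_iff (sub_ne_zero.2 hne.symm), mul_comm, ← intervalIntegral.integral_const_mul]
  exact integral_eq_sub_of_hasDerivAt (fun u _ => hasDerivAt_resolventKernel_mul lam lam' b u)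
    (Continuous.intervalIntegrable (by fun_prop) _ _)

lemma integral_resolventKernel_fract_mul_of_mem_Ico {lam lam' : ℂ} (hne : lam ≠ lam')
    (h : Complex.exp (-lam) ≠ 1) (h' : Complex.exp (-lam') ≠ 1) {r : ℝ} (hr : r ∈ Ico 0 1) :
    ∫ u in 0..1, resolventKernel lam (Int.fract u) * resolventKernel lam' (Int.fract (r - u)) =
      (resolventKernel lam r - resolventKernel lam' r) / (lam' - lam) := by
  obtain ⟨hr₀, hr₁⟩ := hr
  set f := fun u => resolventKernel lam (Int.fract u) * resolventKernel lam' (Int.fract (r - u))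
  have hleft : EqOn f (fun u => resolventKernel lam u * resolventKernel lam' (r - u)) (Ioo 0 r) :=
    fun u ⟨hu₀, hur⟩ => by
      simp only [f, Int.fract_eq_self.2 (⟨hu₀.le, by linarith⟩ : 0 ≤ u ∧ u < 1),
        Int.fract_eq_self.2 (⟨by linarith, by linarith⟩ : 0 ≤ r - u ∧ r - u < 1)]
  have hright : EqOn f (fun u => resolventKernel lam u * resolventKernel lam' (r + 1 - u))
      (Ioo r 1) := fun u ⟨hru, hu₁⟩ => by
    have hfract : Int.fract (r - u) = r + 1 - u := by
      rw [← Int.fract_add_one, Int.fract_eq_self.2 ⟨by linarith, by linarith⟩]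
      ring
    simp only [f, hfract, Int.fract_eq_self.2 (⟨by linarith, hu₁⟩ : 0 ≤ u ∧ u < 1)]
  have hint_left : IntervalIntegrable f volume 0 r :=
    (Continuous.intervalIntegrable (by fun_prop) _ _).congr_uIoo (uIoo_of_le hr₀ ▸ hleft.symm)
  have hint_right : IntervalIntegrable f volume r 1 :=
    (Continuous.intervalIntegrable (by fun_prop) _ _).congr_uIoo (uIoo_of_le hr₁.le ▸ hright.symm)
  rw [← integral_add_adjacent_intervals hint_left hint_right,
    integral_congr_Ioo_of_le hr₀ hleft, integral_congr_Ioo_of_le hr₁.le hright,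
    integral_resolventKernel_mul hne, integral_resolventKernel_mul hne, ← add_div]
  congr 1
  rw [sub_self, sub_zero, add_sub_cancel_left, add_sub_cancel_right]
  linear_combination resolventKernel lam r * resolventKernel_zero_sub_one h'
    - resolventKernel lam' r * resolventKernel_zero_sub_one h

lemma integral_resolventKernel_fract_mul {lam lam' : ℂ} (hne : lam ≠ lam')
    (h : Complex.exp (-lam) ≠ 1) (h' : Complex.exp (-lam') ≠ 1) (a : ℝ) :
    ∫ u in 0..1, resolventKernel lam (Int.fract u) * resolventKernel lam' (Int.fract (a - u)) =
      (resolventKernel lam (Int.fract a) - resolventKernel lam' (Int.fract a)) / (lam' - lam) := by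
  have hfract : ∀ u, Int.fract (a - u) = Int.fract (Int.fract a - u) := fun u => by
    rw [← Int.fract_add_intCast (Int.fract a - u) ⌊a⌋]
    congr 1
    rw [← Int.self_sub_floor]
    ring
  simp_rw [hfract]
  exact integral_resolventKernel_fract_mul_of_mem_Ico hne h h'
    ⟨Int.fract_nonneg a, Int.fract_lt_one a⟩

/-- Resolvent-type identity:
`∫₀¹ (e^{-λ[s-t]}/(1-e^{-λ}))(e^{-λ'[t'-s]}/(1-e^{-λ'})) ds
  = (1/(λ-λ'))(e^{-λ'[t'-t]}/(1-e^{-λ'}) - e^{-λ[t'-t]}/(1-e^{-λ}))`. -/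
theorem kernel_resolvent_identity (lam lam' : ℂ) (hne : lam ≠ lam')
    (h1 : Complex.exp (-lam) ≠ 1) (h2 : Complex.exp (-lam') ≠ 1)
    (t t' : ℝ) (ht : t ∈ Set.Ico (0 : ℝ) 1) (ht' : t' ∈ Set.Ico (0 : ℝ) 1) :
    ∫ s in (0 : ℝ)..1,
        (Complex.exp (-lam * ((resMod1 (s - t) : ℝ) : ℂ)) / (1 - Complex.exp (-lam))) *
        (Complex.exp (-lam' * ((resMod1 (t' - s) : ℝ) : ℂ)) / (1 - Complex.exp (-lam')))
    = (1 / (lam - lam')) *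
        (Complex.exp (-lam' * ((resMod1 (t' - t) : ℝ) : ℂ)) / (1 - Complex.exp (-lam'))
          - Complex.exp (-lam * ((resMod1 (t' - t) : ℝ) : ℂ)) / (1 - Complex.exp (-lam))) := by
  obtain ⟨ht₀, ht₁⟩ := ht
  obtain ⟨ht'₀, ht'₁⟩ := ht'
  have hperiodic : Function.Periodic (fun u => resolventKernel lam (Int.fract u) *
      resolventKernel lam' (Int.fract (t' - t - u))) 1 := fun u => by
    simp only [Int.fract_add_one, ← sub_sub, Int.fract_sub_one]
  change ∫ s in (0 : ℝ)..1, resolventKernel lam (resMod1 (s - t)) *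
      resolventKernel lam' (resMod1 (t' - s)) = 1 / (lam - lam') *
        (resolventKernel lam' (resMod1 (t' - t)) - resolventKernel lam (resMod1 (t' - t)))
  calc _ = ∫ s in (0 : ℝ)..1, resolventKernel lam (Int.fract (s - t)) *
        resolventKernel lam' (Int.fract (t' - t - (s - t))) :=
        integral_congr_Ioo_of_le zero_le_one fun s ⟨hs₀, hs₁⟩ => by
          rw [sub_sub_sub_cancel_right, resMod1_eq_fract_s10 ⟨by linarith, by linarith⟩,
            resMod1_eq_fract_s10 ⟨by linarith, by linarith⟩]
    _ = (resolventKernel lam (Int.fract (t' - t)) - resolventKernel lam' (Int.fract (t' - t))) /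
        (lam' - lam) := by
      rw [hperiodic.intervalIntegral_comp_sub, integral_resolventKernel_fract_mul hne h1 h2]
    _ = _ := by
      rw [resMod1_eq_fract_s10 ⟨by linarith, by linarith⟩, ← neg_sub lam, div_neg, ← neg_div,
        neg_sub, one_div_mul_eq_div]
end
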